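/- Let A = (A₁ A₂) ∈ ℝ^{m×n} with A₁ ∈ ℝ^{m×k}, let W = (W₁ 𝟙) ∈ ℝ^{m×n} with W₁ ∈ ℝ^{m×k}, and let k ≤ r. Then the infimum of ‖(A − (X₁ X₂)) ⊙ W‖_F² over all X₁ ∈ ℝ^{m×k} with rank(X₁) = k and X₂ ∈ ℝ^{m×(n−k)} with rank(X₁ X₂) ≤ r equals the infimum of ‖(A₁ − X₁) ⊙ W₁‖_F² + ‖A₂ − X₁C − BD‖_F² over all X₁ ∈ ℝ^{m×k} with rank(X₁) = k, C ∈ ℝ^{k×(n−k)}, B ∈ ℝ^{m×(r−k)}, D ∈ ℝ^{(r−k)×(n−k)}. (The weighted low-rank approximation problem (7) with weight W = (W₁ 𝟙) reduces to the factored problem (9).) -/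

import Mathlib

open Matrix

/-- Frobenius norm of a real matrix. -/
noncomputable def frobNorm {m n : Type*} [Fintype m] [Fintype n] (A : Matrix m n ℝ) : ℝ :=
  Real.sqrt (∑ i, ∑ j, (A i j) ^ 2)

/-!
Since the weight is `1` on the second block, the cost splits as
`‖(A₁ - X₁) ⊙ W₁‖² + ‖A₂ - X₂‖²`, so the two problems agree once the rank constraint is
understood: for `X₁` of rank `k ≤ r`, `rank (X₁ X₂) ≤ r` holds exactly when
`X₂ = X₁ C + B D` with `B` having `r - k` columns. Indeed the column space of `(X₁ X₂)` is that
of `X₁` plus a complement of dimension at most `r - k`, which can be taken to be the column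
space of such a `B`; conversely the columns of `X₁ C + B D` lie in the span of those of `X₁`
and `B`.
-/

open Module Submodule

theorem Submodule.exists_sup_eq_finrank_add_eq {K V : Type*} [Field K] [AddCommGroup V]
    [Module K V] [FiniteDimensional K V] {U T : Submodule K V} (hUT : U ≤ T) :
    ∃ S : Submodule K V, U ⊔ S = T ∧ finrank K U + finrank K S = finrank K T := by
  obtain ⟨V', hV'⟩ := U.exists_isCompl
  have hsup : U ⊔ V' ⊓ T = T := by
    rw [← sup_inf_assoc_of_le V' hUT, hV'.sup_eq_top, top_inf_eq]
  have hinf : U ⊓ V' ⊓ T = ⊥ := by rw [hV'.inf_eq_bot, bot_inf_eq]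
  refine ⟨V' ⊓ T, hsup, ?_⟩
  have := finrank_sup_add_finrank_inf_eq U (V' ⊓ T)
  rw [hsup, ← inf_assoc, hinf, finrank_bot] at this
  omega

namespace Matrix

section Blocks

variable {R m n n' : Type*}

theorem fromCols_sub_fromCols [Sub R] (A₁ B₁ : Matrix m n R) (A₂ B₂ : Matrix m n' R) :
    fromCols A₁ A₂ - fromCols B₁ B₂ = fromCols (A₁ - B₁) (A₂ - B₂) := by
  ext i (j | j) <;> rfl

theorem hadamard_fromCols_one [MulOneClass R] (M₁ W₁ : Matrix m n R) (M₂ : Matrix m n' R) :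
    fromCols M₁ M₂ ⊙ fromCols W₁ (of fun _ _ => 1) = fromCols (M₁ ⊙ W₁) M₂ := by
  ext i (j | j) <;> simp

end Blocks

section CommRing

variable {R : Type*} [CommRing R] {m n n' ι : Type*} [Fintype n] [Fintype n'] [Fintype ι]

theorem range_mulVecLin_fromCols (A : Matrix m n R) (B : Matrix m n' R) :
    LinearMap.range (fromCols A B).mulVecLin =
      LinearMap.range A.mulVecLin ⊔ LinearMap.range B.mulVecLin := by
  rw [range_mulVecLin, range_mulVecLin, range_mulVecLin, ← span_union, ← Set.Sum.elim_range]
  congr 2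
  funext j
  cases j <;> rfl

theorem exists_mul_eq_of_range_mulVecLin_le {X : Matrix m n R} {Y : Matrix m n' R}
    (h : LinearMap.range Y.mulVecLin ≤ LinearMap.range X.mulVecLin) :
    ∃ C : Matrix n n' R, X * C = Y := by
  have hcol (j : n') : ∃ c, X *ᵥ c = Y.col j := by
    apply h
    rw [range_mulVecLin]
    exact subset_span ⟨j, rfl⟩
  choose c hc using hcol
  refine ⟨of fun i j => c j i, ?_⟩
  ext i j
  simpa [mul_apply, mulVec, dotProduct] using congrFun (hc j) i

theorem range_mulVecLin_add_mul_le (X₁ : Matrix m n R) (C : Matrix n n' R)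
    (B : Matrix m ι R) (D : Matrix ι n' R) :
    LinearMap.range (X₁ * C + B * D).mulVecLin ≤
      LinearMap.range X₁.mulVecLin ⊔ LinearMap.range B.mulVecLin := by
  rw [mulVecLin_add, mulVecLin_mul, mulVecLin_mul]
  exact (LinearMap.range_add_le _ _).trans
    (sup_le_sup (LinearMap.range_comp_le_range _ _) (LinearMap.range_comp_le_range _ _))

end CommRing

section Field

variable {K : Type*} [Field K] {m n n' ι : Type*} [Fintype m] [Fintype n] [Fintype n']
  [Fintype ι]

theorem exists_range_mulVecLin_eq (S : Submodule K (m → K))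
    (hS : finrank K S ≤ Fintype.card ι) :
    ∃ B : Matrix m ι K, LinearMap.range B.mulVecLin = S := by
  classical
  let e : Fin (finrank K S) → ι := (Fintype.equivFin ι).symm ∘ Fin.castLE hS
  have he : Function.Injective e :=
    (Fintype.equivFin ι).symm.injective.comp (Fin.castLE_injective hS)
  let L : (ι → K) →ₗ[K] m → K :=
    S.subtype ∘ₗ (finBasis K S).equivFun.symm.toLinearMap ∘ₗ LinearMap.funLeft K K e
  refine ⟨LinearMap.toMatrix' L, ?_⟩
  rw [← toLin'_apply', toLin'_toMatrix', LinearMap.range_comp_of_range_eq_top, range_subtype]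
  rw [LinearMap.range_eq_top]
  exact (finBasis K S).equivFun.symm.surjective.comp
    (LinearMap.funLeft_surjective_of_injective _ _ _ he)

theorem rank_fromCols_le_rank_add_card_iff (X₁ : Matrix m n K) (X₂ : Matrix m n' K) :
    (fromCols X₁ X₂).rank ≤ X₁.rank + Fintype.card ι ↔
      ∃ (C : Matrix n n' K) (B : Matrix m ι K) (D : Matrix ι n' K), X₂ = X₁ * C + B * D := by
  constructor
  · intro hrank
    obtain ⟨S, hsup, hdim⟩ := exists_sup_eq_finrank_add_eq
      (le_sup_left.trans (range_mulVecLin_fromCols X₁ X₂).ge)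
    obtain ⟨B, rfl⟩ := exists_range_mulVecLin_eq (ι := ι) S (by rw [rank, rank] at hrank; omega)
    obtain ⟨E, hE⟩ := exists_mul_eq_of_range_mulVecLin_le (X := fromCols X₁ B) (Y := X₂) (by
      rw [range_mulVecLin_fromCols, hsup, range_mulVecLin_fromCols]
      exact le_sup_right)
    refine ⟨E.toRows₁, B, E.toRows₂, ?_⟩
    rw [← hE, ← fromCols_mul_fromRows, fromRows_toRows]
  · rintro ⟨C, B, D, rfl⟩
    calc (fromCols X₁ (X₁ * C + B * D)).rank
        ≤ finrank K (LinearMap.range X₁.mulVecLin ⊔ LinearMap.range B.mulVecLin :) := by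
          rw [rank, range_mulVecLin_fromCols]
          exact finrank_mono (sup_le le_sup_left (range_mulVecLin_add_mul_le X₁ C B D))
      _ ≤ X₁.rank + B.rank := finrank_add_le_finrank_add_finrank _ _
      _ ≤ X₁.rank + Fintype.card ι := by gcongr; exact rank_le_card_width B

end Field

end Matrix

theorem frobNorm_sq {m n : Type*} [Fintype m] [Fintype n] (A : Matrix m n ℝ) :
    frobNorm A ^ 2 = ∑ i, ∑ j, A i j ^ 2 :=
  Real.sq_sqrt (by positivity)

theorem frobNorm_fromCols_sq {m n n' : Type*} [Fintype m] [Fintype n] [Fintype n']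
    (P : Matrix m n ℝ) (Q : Matrix m n' ℝ) :
    frobNorm (fromCols P Q) ^ 2 = frobNorm P ^ 2 + frobNorm Q ^ 2 := by
  simp only [frobNorm_sq, Fintype.sum_sum_type, fromCols_apply_inl, fromCols_apply_inr,
    Finset.sum_add_distrib]

/-- The weighted low-rank approximation problem with block weight `W = (W₁ 𝟙)` reduces to
the factored problem: the infimum of `‖(A − (X₁ X₂)) ⊙ W‖_F²` over `X₁` of rank `k` and
`X₂` with `rank (X₁ X₂) ≤ r` equals the infimum of
`‖(A₁ − X₁) ⊙ W₁‖_F² + ‖A₂ − X₁ C − B D‖_F²` over `X₁` of rank `k` and factors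
`C ∈ ℝ^{k×(n−k)}`, `B ∈ ℝ^{m×(r−k)}`, `D ∈ ℝ^{(r−k)×(n−k)}`. -/
theorem wlr_reduction
    (m k l r : ℕ) (hkr : k ≤ r)
    (A₁ W₁ : Matrix (Fin m) (Fin k) ℝ)
    (A₂ : Matrix (Fin m) (Fin l) ℝ) :
    sInf { x : ℝ | ∃ (X₁ : Matrix (Fin m) (Fin k) ℝ) (X₂ : Matrix (Fin m) (Fin l) ℝ),
        X₁.rank = k ∧ (Matrix.fromCols X₁ X₂).rank ≤ r ∧
        x = (frobNorm (Matrix.hadamard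
          (Matrix.fromCols A₁ A₂ - Matrix.fromCols X₁ X₂)
          (Matrix.fromCols W₁ (Matrix.of fun (_ : Fin m) (_ : Fin l) => (1 : ℝ))))) ^ 2 } =
    sInf { x : ℝ | ∃ (X₁ : Matrix (Fin m) (Fin k) ℝ) (C : Matrix (Fin k) (Fin l) ℝ)
        (B : Matrix (Fin m) (Fin (r - k)) ℝ) (D : Matrix (Fin (r - k)) (Fin l) ℝ),
        X₁.rank = k ∧
        x = (frobNorm (Matrix.hadamard (A₁ - X₁) W₁)) ^ 2 +
          (frobNorm (A₂ - (X₁ * C + B * D))) ^ 2 } := by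
  have hcost (X₁ : Matrix (Fin m) (Fin k) ℝ) (X₂ : Matrix (Fin m) (Fin l) ℝ) :
      frobNorm ((fromCols A₁ A₂ - fromCols X₁ X₂) ⊙ fromCols W₁ (of fun _ _ => 1)) ^ 2 =
        frobNorm ((A₁ - X₁) ⊙ W₁) ^ 2 + frobNorm (A₂ - X₂) ^ 2 := by
    rw [fromCols_sub_fromCols, hadamard_fromCols_one, frobNorm_fromCols_sq]
  have hrank {X₁ : Matrix (Fin m) (Fin k) ℝ} (hk : X₁.rank = k) (X₂ : Matrix (Fin m) (Fin l) ℝ) :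
      (fromCols X₁ X₂).rank ≤ r ↔ ∃ (C : Matrix (Fin k) (Fin l) ℝ)
        (B : Matrix (Fin m) (Fin (r - k)) ℝ) (D : Matrix (Fin (r - k)) (Fin l) ℝ), X₂ = X₁ * C + B * D := by
    rw [← rank_fromCols_le_rank_add_card_iff, hk, Fintype.card_fin, Nat.add_sub_cancel' hkr]
  congr 1
  ext x
  constructor
  · rintro ⟨X₁, X₂, hk, hr, rfl⟩
    obtain ⟨C, B, D, rfl⟩ := (hrank hk X₂).1 hr
    exact ⟨X₁, C, B, D, hk, hcost _ _⟩
  · rintro ⟨X₁, C, B, D, hk, rfl⟩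
    exact ⟨X₁, _, hk, (hrank hk _).2 ⟨C, B, D, rfl⟩, (hcost _ _).symm⟩
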